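/- Soundness of the GR hypersequent rule ■:r₁: if the GR Hilbert system derives H ∨ □(□A ⊃ A), then it derives H ∨ ■A ∨ □⊥. -/

import Mathlib

/-- Formulas of the bimodal logic GR: propositional variables, ⊥, ¬, ∧,
Gödel box `box` (□) and Rosser box `rbox` (■). -/
inductive GRFormula : Type
  | var : Nat → GRFormula
  | bot : GRFormula
  | neg : GRFormula → GRFormula
  | and : GRFormula → GRFormula → GRFormula
  | box : GRFormula → GRFormula
  | rbox : GRFormula → GRFormula

namespace GRFormula

/-- A ⊃ B defined as ¬(A ∧ ¬B). -/
def impl (A B : GRFormula) : GRFormula := neg (and A (neg B))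

/-- A ∨ B defined as ¬(¬A ∧ ¬B). -/
def or (A B : GRFormula) : GRFormula := neg (and (neg A) (neg B))

/-- ◇A := ¬□¬A. -/
def dia (A : GRFormula) : GRFormula := neg (box (neg A))

/-- A ≡ B := (A ⊃ B) ∧ (B ⊃ A). -/
def iff (A B : GRFormula) : GRFormula := and (impl A B) (impl B A)

/-- ⊤ := ¬⊥. -/
def top : GRFormula := neg bot

/-- Propositional tautology: true under every boolean valuation that
respects ⊥, ¬, ∧ (treating modal formulas as atoms). -/
def IsTaut (A : GRFormula) : Prop :=
  ∀ v : GRFormula → Bool,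
    v bot = false →
    (∀ B, v (neg B) = !v B) →
    (∀ B C, v (and B C) = (v B && v C)) →
    v A = true

end GRFormula

open GRFormula

/-- Hilbert-style derivability in the bimodal logic GR. -/
inductive GRProof : GRFormula → Prop
  | taut {A} : IsTaut A → GRProof A
  | axK (A B) : GRProof (impl (box (impl A B)) (impl (box A) (box B)))
  | axLob (A) : GRProof (impl (box (impl (box A) A)) (box A))
  | axRG (A) : GRProof (impl (rbox A) (box A))
  | axGGR (A) : GRProof (impl (box A) (box (rbox A)))
  | axGR (A) : GRProof (impl (box A) (or (box bot) (rbox A)))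
  | axDia (A) : GRProof (impl (dia (rbox A)) (dia A))
  | mp {A B} : GRProof (impl A B) → GRProof A → GRProof B
  | nec {A} : GRProof A → GRProof (box A)
  | conec {A} : GRProof (box A) → GRProof A

/-! By Löb's axiom `□(□A ⊃ A)` yields `□A`, and the axiom `□A ⊃ □⊥ ∨ ■A` turns this into
`■A ∨ □⊥`; the implication `□(□A ⊃ A) ⊃ ■A ∨ □⊥` is then applied inside the side formula `H`. -/

namespace GRFormula

lemma isTaut_impl_trans (A B C : GRFormula) :
    IsTaut (impl (impl A B) (impl (impl B C) (impl A C))) := by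
  intro v _ hn ha
  simp only [impl, hn, ha]
  cases v A <;> cases v B <;> cases v C <;> rfl

lemma isTaut_or_mono_right (H B C : GRFormula) :
    IsTaut (impl (impl B C) (impl (or H B) (or H C))) := by
  intro v _ hn ha
  simp only [impl, or, hn, ha]
  cases v H <;> cases v B <;> cases v C <;> rfl

lemma isTaut_or_comm (A B : GRFormula) : IsTaut (impl (or A B) (or B A)) := by
  intro v _ hn ha
  simp only [impl, or, hn, ha]
  cases v A <;> cases v B <;> rfl

end GRFormula

namespace GRProof

variable {A B C H : GRFormula}

lemma impl_trans (hAB : GRProof (impl A B)) (hBC : GRProof (impl B C)) :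
    GRProof (impl A C) :=
  mp (mp (taut (isTaut_impl_trans A B C)) hAB) hBC

lemma or_mono_right (hBC : GRProof (impl B C)) (h : GRProof (or H B)) : GRProof (or H C) :=
  mp (mp (taut (isTaut_or_mono_right H B C)) hBC) h

lemma box_lob_impl_rbox_or_box_bot (A : GRFormula) :
    GRProof (impl (box (impl (box A) A)) (or (rbox A) (box bot))) :=
  ((axLob A).impl_trans (axGR A)).impl_trans (taut (isTaut_or_comm _ _))

end GRProof

theorem gr_rbox_r1_sound (H A : GRFormula)
    (h : GRProof (or H (box (impl (box A) A)))) :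
    GRProof (or H (or (rbox A) (box bot))) :=
  (GRProof.box_lob_impl_rbox_or_box_bot A).or_mono_right h
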